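/- arXiv:cs/0511033 — 6 statements merged into one kernel-verified Lean document; each statement's English description precedes it below -/
import Mathlib

section
/- Let R be a commutative ring and let F_1,…,F_m ∈ R[X]^{k×k} be polynomial companion matrices, where F_i has first row (f_{i1}, f_{i2}, …, f_{ik}) with deg(f_{ij}) ≤ j for all i, j. Then the product B := F_1·F_2⋯F_m satisfies deg(B_{ij}) ≤ m + j − i for all 1 ≤ i, j ≤ k. -/
/-- Degree of a polynomial as an element of `WithBot ℤ`, with the convention
`degZ 0 = ⊥` ("deg(0) = −∞"). -/
noncomputable def degZ {R : Type*} [Semiring R] (p : Polynomial R) : WithBot ℤ :=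
  p.degree.map (Nat.cast : ℕ → ℤ)

/-- `F` is a companion matrix: arbitrary first row, ones on the subdiagonal,
zeros everywhere else. (Indices are 0-based.) -/
def IsCompanionMatrix {R : Type*} [Semiring R] {k : ℕ}
    (F : Matrix (Fin k) (Fin k) (Polynomial R)) : Prop :=
  ∀ i j : Fin k, (i : ℕ) ≠ 0 → F i j = if (i : ℕ) = (j : ℕ) + 1 then 1 else 0

lemma map_cast_mono {a b : WithBot ℕ} (h : a ≤ b) :
    a.map (Nat.cast : ℕ → ℤ) ≤ b.map (Nat.cast : ℕ → ℤ) := by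
  cases a with
  | bot => simp
  | coe x =>
    cases b with
    | bot => simp at h
    | coe y =>
      simp only [WithBot.map_coe, WithBot.coe_le_coe] at h ⊢
      exact_mod_cast h

lemma map_cast_add (a b : WithBot ℕ) :
    (a + b).map (Nat.cast : ℕ → ℤ) = a.map Nat.cast + b.map Nat.cast := by
  cases a <;> cases b <;> simp [WithBot.map_coe, ← WithBot.coe_add]

lemma degZ_mul_le {R : Type*} [Semiring R] (p q : Polynomial R) :
    degZ (p * q) ≤ degZ p + degZ q := by
  refine le_trans (map_cast_mono (Polynomial.degree_mul_le p q)) ?_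
  rw [map_cast_add]; exact le_rfl

lemma degZ_add_le {R : Type*} [Semiring R] {p q : Polynomial R} {D : WithBot ℤ}
    (hp : degZ p ≤ D) (hq : degZ q ≤ D) : degZ (p + q) ≤ D := by
  refine le_trans (map_cast_mono (Polynomial.degree_add_le p q)) ?_
  rcases max_cases p.degree q.degree with ⟨h, _⟩ | ⟨h, _⟩ <;> rw [h]
  exacts [hp, hq]

lemma degZ_sum_le {R : Type*} [Semiring R] {ι : Type*} (s : Finset ι)
    (f : ι → Polynomial R) {D : WithBot ℤ} (h : ∀ l ∈ s, degZ (f l) ≤ D) :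
    degZ (∑ l ∈ s, f l) ≤ D := by
  classical
  induction s using Finset.induction with
  | empty => simp [degZ]
  | insert _ _ hx ih =>
    rw [Finset.sum_insert hx]
    exact degZ_add_le (h _ (Finset.mem_insert_self _ _))
      (ih fun l hl => h _ (Finset.mem_insert_of_mem hl))

/-- Observation (degree pattern), part b): if `F₁, …, Fₘ` are polynomial companion matrices
whose first rows `(f_{i1}, …, f_{ik})` satisfy `deg f_{ij} ≤ j` (1-based indexing), then the
product `B := F₁ ⋯ Fₘ` satisfies `deg B_{ij} ≤ m + j − i` for all `i, j`.
Here indices of `Fin k` are 0-based, so the bounds are shifted accordingly. -/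
theorem stmt1 {R : Type*} [CommRing R] (k m : ℕ) (hk : 0 < k)
    (Fs : Fin m → Matrix (Fin k) (Fin k) (Polynomial R))
    (hcomp : ∀ i : Fin m, IsCompanionMatrix (Fs i))
    (hdeg : ∀ i : Fin m, ∀ j : Fin k, degZ (Fs i ⟨0, hk⟩ j) ≤ (((j : ℕ) + 1 : ℤ) : WithBot ℤ)) :
    ∀ i j : Fin k,
      degZ ((List.ofFn Fs).prod i j) ≤ (((m : ℤ) + (j : ℕ) - (i : ℕ) : ℤ) : WithBot ℤ) := by
  induction m with
  | zero =>
    intro i j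
    simp only [List.ofFn_zero, List.prod_nil]
    rw [Matrix.one_apply]
    split
    · subst ‹i = j›
      have h1 : degZ (1 : Polynomial R) ≤ (0 : WithBot ℤ) := by
        refine le_trans (map_cast_mono Polynomial.degree_one_le) ?_
        simp [WithBot.map_coe]
      simpa using h1
    · simp [degZ]
  | succ m ih =>
    intro i j
    rw [List.ofFn_succ, List.prod_cons, Matrix.mul_apply]
    set B := (List.ofFn fun i : Fin m => Fs i.succ).prod with hB
    have ihB : ∀ a b : Fin k,
        degZ (B a b) ≤ (((m : ℤ) + (b : ℕ) - (a : ℕ) : ℤ) : WithBot ℤ) :=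
      ih (fun i => Fs i.succ) (fun i => hcomp i.succ) (fun i => hdeg i.succ)
    refine degZ_sum_le _ _ ?_
    intro l _
    by_cases hi : (i : ℕ) = 0
    · have hi0 : i = ⟨0, hk⟩ := Fin.ext hi
      have h1 : degZ (Fs 0 i l) ≤ (((l : ℕ) + 1 : ℤ) : WithBot ℤ) := by
        rw [hi0]; exact hdeg 0 l
      have h2 := ihB l j
      refine le_trans (degZ_mul_le _ _) (le_trans (add_le_add h1 h2) ?_)
      rw [← WithBot.coe_add, WithBot.coe_le_coe]
      omega
    · rw [hcomp 0 i l hi]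
      split
      · rename_i hil
        rw [one_mul]
        refine le_trans (ihB l j) ?_
        rw [WithBot.coe_le_coe]
        omega
      · simp [degZ]
end

section
/- Let F be a field and let A ∈ F(X)^{k×k} be an invertible k×k matrix of rational functions in one variable X, where every entry a_{ij} can be written as a quotient of two polynomials each of degree at most d. Then every entry of A^{−1} can be written as a quotient of two polynomials each of degree at most d·k²; moreover all entries of A^{−1} can be written with one common denominator polynomial of degree at most d·k². -/
/-!
Clear denominators row by row: multiplying row `a` of `A` by `r a = ∏ b, q a b` gives a
polynomial matrix `B = diag(r) A` whose entries have degree at most `k d`. Then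
`A⁻¹ = B⁻¹ diag(r) = adj(B) diag(r) / det B`, and the numerator `adj(B) i j * r j` is the
determinant of `B` with row `j` replaced by `r j • eᵢ`. Both it and `det B` are determinants
of `k × k` matrices with entries of degree at most `k d`, hence have degree at most `d k²`.
-/

open Polynomial Finset Matrix

namespace Polynomial

variable {R : Type*} [CommRing R]

theorem degree_prod_le_card_mul {ι : Type*} (s : Finset ι) (f : ι → R[X]) {m : ℕ}
    (h : ∀ i ∈ s, (f i).degree ≤ m) : (∏ i ∈ s, f i).degree ≤ (s.card * m : ℕ) :=
  calc (∏ i ∈ s, f i).degree ≤ ∑ i ∈ s, (f i).degree := degree_prod_le s f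
    _ ≤ s.card • (m : WithBot ℕ) := sum_le_card_nsmul s _ _ h
    _ = (s.card * m : ℕ) := by norm_cast

theorem degree_det_le {n : Type*} [Fintype n] [DecidableEq n] (M : Matrix n n R[X]) {m : ℕ}
    (h : ∀ i j, (M i j).degree ≤ m) : M.det.degree ≤ (Fintype.card n * m : ℕ) := by
  rw [det_apply]
  refine (degree_sum_le _ _).trans (Finset.sup_le fun σ _ => ?_)
  calc (Equiv.Perm.sign σ • ∏ i, M (σ i) i).degree ≤ (∏ i, M (σ i) i).degree := by
        rw [Units.smul_def]; exact degree_smul_le _ _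
    _ ≤ (Fintype.card n * m : ℕ) := degree_prod_le_card_mul _ _ fun i _ => h _ _

theorem degree_prod_update_le {ι : Type*} [Fintype ι] [DecidableEq ι] (q : ι → R[X]) (b : ι)
    (x : R[X]) {m : ℕ} (hq : ∀ c, (q c).degree ≤ m) (hx : x.degree ≤ m) :
    (∏ c, Function.update q b x c).degree ≤ (Fintype.card ι * m : ℕ) :=
  degree_prod_le_card_mul univ _ fun c _ => by
    rw [Function.update_apply]
    split_ifs
    exacts [hx, hq c]

theorem degree_updateRow_single_apply_le {n : Type*} [DecidableEq n] (M : Matrix n n R[X])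
    (i j : n) (x : R[X]) {m : ℕ} (hM : ∀ a b, (M a b).degree ≤ m) (hx : x.degree ≤ m) (a b : n) :
    (M.updateRow j (Pi.single i x) a b).degree ≤ m := by
  rw [updateRow_apply, Pi.single_apply]
  split_ifs
  exacts [hx, by simp, hM a b]

end Polynomial

namespace Matrix

variable {n R K : Type*} [Fintype n] [DecidableEq n] [CommRing R] [Field K]

theorem adjugate_apply_mul (M : Matrix n n R) (i j : n) (s : R) :
    M.adjugate i j * s = (M.updateRow j (Pi.single i s)).det := by
  rw [adjugate_apply, mul_comm, ← det_updateRow_smul, ← Pi.single_smul, smul_eq_mul, mul_one]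

theorem map_prod_update_eq_diagonal_mul (f : R →+* K) (p q : n → n → R)
    (hq : ∀ a b, f (q a b) ≠ 0) :
    (of fun a b => ∏ c, Function.update (q a) b (p a b) c).map f =
      diagonal (fun a => f (∏ b, q a b)) * of fun a b => f (p a b) / f (q a b) := by
  ext a b
  rw [map_apply, of_apply, diagonal_mul, of_apply, prod_update_of_mem (mem_univ b),
    ← mul_prod_erase univ (q a) (mem_univ b), map_mul, map_mul, sdiff_singleton_eq_erase]
  have := hq a b
  field_simp

theorem inv_apply_eq_adjugate_diagonal_mul (A : Matrix n n K) (v : n → K) (hv : ∀ i, v i ≠ 0)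
    (i j : n) : A⁻¹ i j = (diagonal v * A).adjugate i j * v j / (diagonal v * A).det := by
  have hD : IsUnit (diagonal v).det := by
    rw [det_diagonal, isUnit_iff_ne_zero]
    exact prod_ne_zero_iff.2 fun i _ => hv i
  have hA : A⁻¹ = (diagonal v * A)⁻¹ * diagonal v := by
    rw [mul_inv_rev, Matrix.mul_assoc, nonsing_inv_mul _ hD, Matrix.mul_one]
  rw [hA, mul_diagonal, inv_def, smul_apply, Ring.inverse_eq_inv', smul_eq_mul]
  ring

theorem inv_apply_eq_det_updateRow_div {A : Matrix n n K} (hA : IsUnit A.det) (f : R →+* K)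
    (B : Matrix n n R) (r : n → R) (hr : ∀ a, f (r a) ≠ 0)
    (hBA : B.map f = diagonal (fun a => f (r a)) * A) :
    f B.det ≠ 0 ∧ ∀ i j, A⁻¹ i j = f (B.updateRow j (Pi.single i (r j))).det / f B.det := by
  have hdet : f B.det = (∏ a, f (r a)) * A.det := by
    rw [f.map_det, f.mapMatrix_apply, hBA, det_mul, det_diagonal]
  refine ⟨hdet ▸ mul_ne_zero (prod_ne_zero_iff.2 fun a _ => hr a) hA.ne_zero, fun i j => ?_⟩
  have hadj : (B.map f).adjugate i j = f (B.adjugate i j) := by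
    rw [← f.mapMatrix_apply, ← f.map_adjugate]; rfl
  rw [inv_apply_eq_adjugate_diagonal_mul A _ hr, ← hBA, hadj, ← f.mapMatrix_apply, ← f.map_det,
    ← map_mul, adjugate_apply_mul]

end Matrix

/-- Observation (Gaussian elimination degrees), part a): if `A` is an invertible `k × k`
matrix of rational functions each of which is a quotient of two polynomials of degree
at most `d`, then every entry of `A⁻¹` is a quotient of two polynomials of degree at most
`d·k²`; moreover all entries of `A⁻¹` admit one common denominator of degree at most `d·k²`. -/
theorem stmt2 {F : Type*} [Field F] (k d : ℕ) (A : Matrix (Fin k) (Fin k) (RatFunc F))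
    (hinv : IsUnit A.det)
    (hA : ∀ i j : Fin k, ∃ p q : Polynomial F, q ≠ 0 ∧
      p.degree ≤ (d : ℕ) ∧ q.degree ≤ (d : ℕ) ∧
      A i j = algebraMap (Polynomial F) (RatFunc F) p / algebraMap (Polynomial F) (RatFunc F) q) :
    ∃ (P : Matrix (Fin k) (Fin k) (Polynomial F)) (Q : Polynomial F), Q ≠ 0 ∧
      Q.degree ≤ (d * k ^ 2 : ℕ) ∧ (∀ i j : Fin k, (P i j).degree ≤ (d * k ^ 2 : ℕ)) ∧
      ∀ i j : Fin k, A⁻¹ i j =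
        algebraMap (Polynomial F) (RatFunc F) (P i j) / algebraMap (Polynomial F) (RatFunc F) Q := by
  choose p q hq hp_deg hq_deg hA using hA
  set φ := algebraMap F[X] (RatFunc F)
  set r : Fin k → F[X] := fun a => ∏ b, q a b
  set B : Matrix (Fin k) (Fin k) F[X] := of fun a b => ∏ c, Function.update (q a) b (p a b) c
  have hBA : B.map φ = diagonal (fun a => φ (r a)) * A := by
    rw [map_prod_update_eq_diagonal_mul φ p q fun a b => RatFunc.algebraMap_ne_zero (hq a b)]
    exact congrArg _ (Matrix.ext fun a b => (hA a b).symm)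
  have hr : ∀ a, φ (r a) ≠ 0 := fun a =>
    RatFunc.algebraMap_ne_zero (prod_ne_zero_iff.2 fun b _ => hq a b)
  have hr_deg : ∀ a, (r a).degree ≤ (k * d : ℕ) := fun a => by
    simpa using degree_prod_le_card_mul univ (q a) fun b _ => hq_deg a b
  have hB_deg : ∀ a b, (B a b).degree ≤ (k * d : ℕ) := fun a b => by
    simpa [B] using degree_prod_update_le (q a) b (p a b) (hq_deg a) (hp_deg a b)
  obtain ⟨hdet, hinv_eq⟩ := inv_apply_eq_det_updateRow_div hinv φ B r hr hBA
  have hkd : (k * (k * d) : ℕ) = (d * k ^ 2 : ℕ) := by ring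
  refine ⟨of fun i j => (B.updateRow j (Pi.single i (r j))).det, B.det,
    fun h => hdet (by rw [h, map_zero]), ?_, fun i j => ?_, hinv_eq⟩
  · simpa [hkd] using degree_det_le B hB_deg
  · simpa [hkd] using
      degree_det_le _ (degree_updateRow_single_apply_le B i j (r j) hB_deg (hr_deg j))
end

section
/- Let F be a field and let (P_n)_{n∈ℕ} and (Q_n)_{n∈ℕ} be holonomic sequences in F of degree at most d and of depths k and ℓ respectively, where in each case the leading coefficient polynomial a_0 satisfies a_0(n) ≠ 0 for every n ∈ ℕ. Then the sum (P_n + Q_n)_{n∈ℕ} is holonomic of depth K ≤ k + ℓ and degree D ≤ (k+ℓ)²·d; more precisely, there exist K ≤ k+ℓ and polynomials c_0,…,c_K ∈ F[N], not all zero, each of degree at most (k+ℓ)²·d, such that c_0(n)·(P_{n+K}+Q_{n+K}) + c_1(n)·(P_{n+K−1}+Q_{n+K−1}) + ⋯ + c_K(n)·(P_n+Q_n) = 0 for all sufficiently large n. -/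
/-! Multiplying by `∏_{s ≤ l} a₀(n + s)`, the recurrence of `P` expresses each of
`P(n), …, P(n + k + l)` as a combination of `P(n), …, P(n + k - 1)` with polynomial coefficients
of degree at most `(l + 1) d`; likewise for `Q` with `∏_{s ≤ k} b₀(n + s)`. Polynomials
`z₀, …, z_{k+l}` annihilating all `k + l` resulting coefficient vectors give the relation
`∑ⱼ zⱼ(n) (P + Q)(n + j) = 0`, and for `deg zⱼ ≤ (k + l)² d` this homogeneous linear system over
`F` has more unknowns than equations. -/

open Finset Polynomial

theorem Polynomial.exists_ne_zero_forall_sum_mul_eq_zero {F ι κ : Type*} [Field F] [Fintype ι]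
    [Fintype κ] (G : κ → ι → F[X]) (M : ℕ) (e : ι → ℕ) (hG : ∀ j i, (G j i).natDegree ≤ e i)
    (hcard : ∑ i, (M + e i + 1) < Fintype.card κ * (M + 1)) :
    ∃ z : κ → F[X], z ≠ 0 ∧ (∀ j, (z j).natDegree ≤ M) ∧ ∀ i, ∑ j, z j * G j i = 0 := by
  let poly : (κ → Fin (M + 1) → F) →ₗ[F] κ → F[X] :=
    LinearMap.pi fun j => (degreeLT F (M + 1)).subtype ∘ₗ
      (degreeLTEquiv F (M + 1)).symm.toLinearMap ∘ₗ LinearMap.proj j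
  let f : (κ → Fin (M + 1) → F) →ₗ[F] (i : ι) → Fin (M + e i + 1) → F :=
    LinearMap.pi fun i => LinearMap.pi fun m =>
      lcoeff F m ∘ₗ ∑ j, LinearMap.mulRight F (G j i) ∘ₗ LinearMap.proj j ∘ₗ poly
  have hdim : Module.finrank F ((i : ι) → Fin (M + e i + 1) → F) <
      Module.finrank F (κ → Fin (M + 1) → F) := by
    simpa [Module.finrank_pi_fintype] using hcard
  obtain ⟨c, hc, hc0⟩ :=
    (Submodule.ne_bot_iff _).mp (LinearMap.ker_ne_bot_of_finrank_lt (f := f) hdim)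
  have hdeg (j : κ) : (poly c j).natDegree ≤ M := by
    have : poly c j ∈ degreeLE F M := (degreeLT_succ_eq_degreeLE (R := F)) ▸ Subtype.prop _
    exact natDegree_le_iff_degree_le.mpr (mem_degreeLE.mp this)
  refine ⟨poly c, fun h => hc0 ?_, hdeg, fun i => ?_⟩
  · ext j : 1
    simpa [poly] using congrFun h j
  · have hsum : (∑ j, poly c j * G j i).natDegree ≤ M + e i :=
      natDegree_sum_le_of_forall_le _ _ fun j _ => natDegree_mul_le_of_le (hdeg j) (hG j i)
    ext m
    rw [coeff_zero]
    rcases lt_or_ge m (M + e i + 1) with hm | hm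
    · simpa [f] using congrFun (congrFun (LinearMap.mem_ker.mp hc) i) ⟨m, hm⟩
    · exact coeff_eq_zero_of_natDegree_lt (by omega)

theorem sum_mul_eq_zero_of_mul_eq_sum {R ι κ : Type*} [CommRing R] [NoZeroDivisors R]
    [Fintype ι] [Fintype κ] {D : R} (hD : D ≠ 0) {x : κ → R} {y : ι → R} {g : κ → ι → R}
    (hx : ∀ j, D * x j = ∑ i, g j i * y i) {z : κ → R} (hz : ∀ i, ∑ j, z j * g j i = 0) :
    ∑ j, z j * x j = 0 := by
  refine (mul_eq_zero.mp ?_).resolve_left hD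
  calc D * ∑ j, z j * x j = ∑ j, z j * (D * x j) := by
        rw [mul_sum]
        exact sum_congr rfl fun j _ => mul_left_comm _ _ _
    _ = ∑ i, (∑ j, z j * g j i) * y i := by
      simp_rw [hx, mul_sum, sum_mul, mul_assoc]
      exact sum_comm
    _ = 0 := by simp [hz]

section Recurrence

variable {R : Type*} [CommRing R] {d k : ℕ} {P : ℕ → R} {a : Fin (k + 1) → R[X]}

theorem eval_mul_eq_neg_sum_of_recurrence
    (hP : ∀ n : ℕ, ∑ i : Fin (k + 1), (a i).eval (n : R) * P (n + (k - (i : ℕ))) = 0) (n : ℕ) :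
    (a 0).eval (n : R) * P (n + k) =
      -∑ i : Fin k, (a i.succ).eval (n : R) * P (n + (k - (i + 1))) := by
  rw [eq_neg_iff_add_eq_zero, ← hP n, Fin.sum_univ_succ]
  simp

theorem exists_prod_mul_eq_sum_of_recurrence (hadeg : ∀ i, (a i).natDegree ≤ d)
    (hP : ∀ n : ℕ, ∑ i : Fin (k + 1), (a i).eval (n : R) * P (n + (k - (i : ℕ))) = 0) (t : ℕ) :
    ∀ j < t + k, ∃ G : Fin k → R[X], (∀ i, (G i).natDegree ≤ t * d) ∧ ∀ n : ℕ,
      (∏ s ∈ range t, (a 0).eval ((n + s : ℕ) : R)) * P (n + j) =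
        ∑ i, (G i).eval (n : R) * P (n + i) := by
  induction t with
  | zero =>
    intro j hj
    refine ⟨Pi.single ⟨j, by omega⟩ 1, fun i => ?_, fun n => ?_⟩
    · rcases eq_or_ne i ⟨j, by omega⟩ with rfl | hi <;> simp [*]
    · rw [Finset.sum_eq_single ⟨j, by omega⟩ (fun i _ hi => by simp [hi]) (by simp)]
      simp
  | succ t ih =>
    choose! G hGdeg hG using ih
    intro j hj
    rcases Nat.lt_or_ge j (t + k) with hjt | hjt
    · refine ⟨fun i => taylor (t : R) (a 0) * G j i, fun i => ?_, fun n => ?_⟩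
      · exact (natDegree_mul_le_of_le ((natDegree_taylor _ _).trans_le (hadeg 0))
          (hGdeg j hjt i)).trans_eq (by ring)
      · simp_rw [prod_range_succ, eval_mul, taylor_eval, mul_assoc, ← mul_sum, ← hG j hjt n]
        push_cast
        ring
    · obtain rfl : j = t + k := by omega
      refine ⟨fun m => -∑ i : Fin k, taylor (t : R) (a i.succ) * G (t + k - (i + 1)) m,
        fun m => ?_, fun n => ?_⟩
      · refine (natDegree_neg _).trans_le (natDegree_sum_le_of_forall_le _ _ fun i _ => ?_)
        exact (natDegree_mul_le_of_le ((natDegree_taylor _ _).trans_le (hadeg _))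
          (hGdeg _ (by omega) m)).trans_eq (by ring)
      · have hrec := eval_mul_eq_neg_sum_of_recurrence hP (n + t)
        have hidx (i : Fin k) : n + t + (k - (i + 1)) = n + (t + k - (i + 1)) := by omega
        calc (∏ s ∈ range (t + 1), (a 0).eval ((n + s : ℕ) : R)) * P (n + (t + k))
            = -∑ i : Fin k, (a i.succ).eval ((n + t : ℕ) : R) *
                ((∏ s ∈ range t, (a 0).eval ((n + s : ℕ) : R)) * P (n + (t + k - (i + 1)))) := by
              simp_rw [prod_range_succ, mul_assoc, ← add_assoc, hrec, ← hidx, mul_neg, mul_sum]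
              ring_nf
          _ = _ := by
              have hred (i : Fin k) := hG (t + k - (i + 1)) (by omega) n
              rw [sum_congr rfl fun i _ => congrArg _ (hred i)]
              simp only [eval_neg, eval_finsetSum, eval_mul, taylor_eval, mul_sum,
                sum_mul, neg_mul, sum_neg_distrib]
              rw [sum_comm]
              push_cast
              ring_nf

theorem exists_forall_sum_eval_mul_eq_zero_of_recurrence [IsDomain R]
    (ha0 : ∀ n : ℕ, (a 0).eval (n : R) ≠ 0) (hadeg : ∀ i, (a i).natDegree ≤ d)
    (hP : ∀ n : ℕ, ∑ i : Fin (k + 1), (a i).eval (n : R) * P (n + (k - (i : ℕ))) = 0) (t : ℕ) :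
    ∃ G : ℕ → Fin k → R[X], (∀ j < t + k, ∀ i, (G j i).natDegree ≤ t * d) ∧
      ∀ {K : ℕ} (z : Fin (K + 1) → R[X]), K < t + k → (∀ i, ∑ j, z j * G j i = 0) →
        ∀ n : ℕ, ∑ j, (z j).eval (n : R) * P (n + j) = 0 := by
  choose! G hGdeg hG using exists_prod_mul_eq_sum_of_recurrence hadeg hP t
  refine ⟨G, hGdeg, fun {K} z hK hz n => ?_⟩
  exact sum_mul_eq_zero_of_mul_eq_sum (prod_ne_zero_iff.mpr fun s _ => ha0 (n + s))
    (fun j : Fin (K + 1) => hG j (by omega) n)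
    (fun i => by simpa [eval_finsetSum] using congrArg (eval (n : R)) (hz i))

end Recurrence

/-- Closure of holonomic sequences under addition: if `(P n)` and `(Q n)` are holonomic of
degree at most `d` and depths `k` and `l` respectively (with leading coefficient polynomial
nonvanishing on ℕ), then `(P n + Q n)` is holonomic of depth `K ≤ k + l` and degree
at most `(k + l)² · d`, the recurrence holding for all sufficiently large `n`. -/
theorem stmt5 {F : Type*} [Field F] (d k l : ℕ) (P Q : ℕ → F)
    (a : Fin (k + 1) → Polynomial F) (b : Fin (l + 1) → Polynomial F)
    (ha0 : ∀ n : ℕ, (a 0).eval (n : F) ≠ 0) (hb0 : ∀ n : ℕ, (b 0).eval (n : F) ≠ 0)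
    (hadeg : ∀ i, (a i).degree ≤ (d : ℕ)) (hbdeg : ∀ i, (b i).degree ≤ (d : ℕ))
    (hP : ∀ n : ℕ, ∑ i : Fin (k + 1), (a i).eval (n : F) * P (n + (k - (i : ℕ))) = 0)
    (hQ : ∀ n : ℕ, ∑ i : Fin (l + 1), (b i).eval (n : F) * Q (n + (l - (i : ℕ))) = 0) :
    ∃ (K : ℕ) (c : Fin (K + 1) → Polynomial F), K ≤ k + l ∧
      (∃ i, c i ≠ 0) ∧ (∀ i, (c i).degree ≤ ((k + l) ^ 2 * d : ℕ)) ∧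
      ∃ N : ℕ, ∀ n ≥ N,
        ∑ i : Fin (K + 1), (c i).eval (n : F) *
          (P (n + (K - (i : ℕ))) + Q (n + (K - (i : ℕ)))) = 0 := by
  obtain ⟨GP, hGPdeg, hGP⟩ := exists_forall_sum_eval_mul_eq_zero_of_recurrence ha0
    (fun i => natDegree_le_iff_degree_le.mpr (hadeg i)) hP (l + 1)
  obtain ⟨GQ, hGQdeg, hGQ⟩ := exists_forall_sum_eval_mul_eq_zero_of_recurrence hb0
    (fun i => natDegree_le_iff_degree_le.mpr (hbdeg i)) hQ (k + 1)
  obtain ⟨z, hz0, hzdeg, hz⟩ := exists_ne_zero_forall_sum_mul_eq_zero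
    (fun j : Fin (k + l + 1) => Sum.elim (GP j) (GQ j)) ((k + l) ^ 2 * d)
    (Sum.elim (fun _ => (l + 1) * d) (fun _ => (k + 1) * d))
    (fun j => by
      have := j.isLt
      rintro (i | i)
      exacts [hGPdeg j (by omega) i, hGQdeg j (by omega) i])
    (by
      simp only [Fintype.sum_sum_type, Sum.elim_inl, Sum.elim_inr, sum_const, card_univ,
        Fintype.card_fin, smul_eq_mul]
      -- reduces to `(2kl + k + l) d ≤ (k + l)² d`
      nlinarith [Nat.mul_le_mul_right d (Nat.le_mul_self k),
        Nat.mul_le_mul_right d (Nat.le_mul_self l)])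
  refine ⟨k + l, fun i => z i.rev, le_rfl, ?_, fun i => ?_, 0, fun n _ => ?_⟩
  · obtain ⟨j, hj⟩ := Function.ne_iff.mp hz0
    exact ⟨j.rev, by simpa using hj⟩
  · exact natDegree_le_iff_degree_le.mp (hzdeg _)
  have hidx (i : Fin (k + l + 1)) : k + l - (i : ℕ) = i.rev := by simp [Fin.val_rev]
  simp_rw [hidx]
  rw [Fin.rev_bijective.sum_comp fun j => (z j).eval (n : F) * (P (n + j) + Q (n + j))]
  simp_rw [mul_add, sum_add_distrib, hGP z (by omega) (fun i => hz (.inl i)) n,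
    hGQ z (by omega) (fun i => hz (.inr i)) n, add_zero]
end

section
/- Let F be a field of characteristic zero and let p ∈ F[X] be a polynomial of degree at most d with d ≥ 1. Then for all natural numbers m and all n with n ≥ d, the polynomial identity p · (p^m)^{(n)} = Σ_{k=1}^{d} ((m+1)·C(n−1, k−1) − C(n, k)) · p^{(k)} · (p^m)^{(n−k)} holds in F[X], where f^{(j)} denotes the j-th formal derivative of f and C(a,b) denotes the binomial coefficient (cast into F). -/
open Polynomial Finset

/-- Over a field of characteristic zero, for a polynomial `p` of degree at most `d ≥ 1`
and all `m` and `n ≥ d`, the identity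
`p · (p^m)⁽ⁿ⁾ = Σ_{k=1}^{d} ((m+1)·C(n−1,k−1) − C(n,k)) · p⁽ᵏ⁾ · (p^m)⁽ⁿ⁻ᵏ⁾`
holds in `F[X]`, where `f⁽ʲ⁾` is the `j`-th formal derivative. -/
theorem stmt10 {F : Type*} [Field F] [CharZero F] (d : ℕ) (hd : 1 ≤ d)
    (p : Polynomial F) (hdeg : p.natDegree ≤ d) :
    ∀ m n : ℕ, d ≤ n →
      p * (derivative^[n] (p ^ m)) =
        ∑ k ∈ Finset.Icc 1 d,
          Polynomial.C (((m : F) + 1) * (Nat.choose (n - 1) (k - 1) : F) -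
              (Nat.choose n k : F)) *
            (derivative^[k] p) * (derivative^[n - k] (p ^ m)) := by
  intro m n hn
  have hzero : ∀ k : ℕ, d < k → derivative^[k] p = 0 := fun k hk =>
    iterate_derivative_eq_zero (lt_of_le_of_lt hdeg hk)
  have hre : ∀ f : ℕ → Polynomial F, ∑ k ∈ Icc 1 d, f k = ∑ i ∈ range d, f (i + 1) := by
    intro f
    rw [← Finset.Ico_add_one_right_eq_Icc, Finset.sum_Ico_eq_sum_range]
    refine Finset.sum_congr (by congr 1) fun i _ => by rw [add_comm]
  set A : ℕ → Polynomial F := fun k => derivative^[n - k] (p ^ m) * derivative^[k] p with hA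
  -- Way 1: Leibniz on p^m * p, truncated
  have way1 : derivative^[n] (p ^ m * p) =
      ∑ k ∈ range (d + 1), n.choose k • A k := by
    rw [iterate_derivative_mul]
    refine (Finset.sum_subset (by intro x hx; simp at *; omega) ?_).symm
    intro x _ hx
    simp only [mem_range, not_lt] at hx
    show n.choose x • (derivative^[n - x] (p ^ m) * derivative^[x] p) = 0
    rw [hzero x (by omega), mul_zero, smul_zero]
  -- Way 2
  have way2 : derivative^[n] (p ^ m * p) =
      C ((m : F) + 1) * ∑ j ∈ range n, (n - 1).choose j •
        (derivative^[n - 1 - j] (p ^ m) * derivative^[j] (derivative p)) := by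
    have h1 : p ^ m * p = p ^ (m + 1) := by ring
    have h2 : derivative (p ^ (m + 1)) = C ((m : F) + 1) * (p ^ m * derivative p) := by
      rw [derivative_pow_succ]; ring
    have h3 : n = (n - 1) + 1 := by omega
    rw [h1, h3, Function.iterate_succ_apply, h2, iterate_derivative_C_mul,
      iterate_derivative_mul]
    simp only [Nat.add_sub_cancel, Nat.succ_eq_add_one]
  -- truncate and reindex way 2 sum to Icc 1 d
  have way2' : ∑ j ∈ range n, (n - 1).choose j •
        (derivative^[n - 1 - j] (p ^ m) * derivative^[j] (derivative p))
      = ∑ k ∈ Icc 1 d, (n - 1).choose (k - 1) • A k := by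
    have trunc : ∑ j ∈ range n, (n - 1).choose j •
          (derivative^[n - 1 - j] (p ^ m) * derivative^[j] (derivative p))
        = ∑ j ∈ range d, (n - 1).choose j •
          (derivative^[n - 1 - j] (p ^ m) * derivative^[j] (derivative p)) := by
      refine (Finset.sum_subset (by intro x hx; simp at *; omega) ?_).symm
      intro x _ hx
      simp only [mem_range, not_lt] at hx
      rw [← Function.iterate_succ_apply, hzero (x + 1) (by omega), mul_zero, smul_zero]
    rw [trunc, hre]
    refine Finset.sum_congr rfl fun i _ => ?_
    show _ = (n - 1).choose (i + 1 - 1) •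
      (derivative^[n - (i + 1)] (p ^ m) * derivative^[i + 1] p)
    rw [show i + 1 - 1 = i from rfl, show n - (i + 1) = n - 1 - i by omega,
      Function.iterate_succ_apply]
  -- split off k = 0 from way1
  have split : ∑ k ∈ range (d + 1), n.choose k • A k
      = A 0 + ∑ k ∈ Icc 1 d, n.choose k • A k := by
    rw [Finset.sum_range_succ', Nat.choose_zero_right, one_smul, add_comm, hre]
  have hA0 : A 0 = derivative^[n] (p ^ m) * p := by
    show derivative^[n - 0] (p ^ m) * derivative^[0] p = _
    norm_num
  have key : derivative^[n] (p ^ m) * p =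
      C ((m : F) + 1) * ∑ k ∈ Icc 1 d, (n - 1).choose (k - 1) • A k
        - ∑ k ∈ Icc 1 d, n.choose k • A k := by
    rw [← way2', ← way2, way1, split, hA0]; ring
  rw [mul_comm, key, Finset.mul_sum, ← Finset.sum_sub_distrib]
  refine Finset.sum_congr rfl fun k hk => ?_
  show C ((m : F) + 1) * ((n - 1).choose (k - 1) •
      (derivative^[n - k] (p ^ m) * derivative^[k] p))
    - n.choose k • (derivative^[n - k] (p ^ m) * derivative^[k] p) = _
  simp only [nsmul_eq_mul, map_sub, map_mul, map_add, map_one, map_natCast]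
  ring
end

section
/- Let F be a field of characteristic zero and let p ∈ F[X] be a polynomial of degree at most d with d ≥ 1 and coefficients p_k (the coefficient of X^k in p). Fix m ∈ ℕ and write c_j for the coefficient of X^j in p^m. Then for every n with n ≥ d: p_0 · n! · c_n = Σ_{k=1}^{d} ((m+1)·C(n−1, k−1) − C(n, k)) · k! · p_k · (n−k)! · c_{n−k}, where C(a,b) denotes the binomial coefficient and all integer quantities are cast into F. In particular, the coefficients of p^m form a holonomic sequence of depth d+1 and degree at most d. -/
open Polynomial Finset

lemma poly_id' {F : Type*} [Field F] (p : Polynomial F) (m : ℕ) :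
    p * derivative (p ^ m) = C (m : F) * (derivative p * p ^ m) := by
  cases m with
  | zero => simp
  | succ m =>
    rw [derivative_pow, pow_succ]
    push_cast
    ring_nf

lemma core' {F : Type*} [Field F] [CharZero F] (d : ℕ) (hd : 1 ≤ d)
    (p : Polynomial F) (hdeg : p.natDegree ≤ d) (m N : ℕ) (hN : d ≤ N) :
    ∑ k ∈ range (d+1), ((N:F) - ((m:F)+1)*k) * p.coeff k * (p ^ m).coeff (N-k) = 0 := by
  have hN1 : 1 ≤ N := le_trans hd hN
  have hNN : (N-1).succ = N := by omega
  set q := p ^ m with hq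
  have hpz : ∀ k, d < k → p.coeff k = 0 := fun k hk =>
    coeff_eq_zero_of_natDegree_lt (lt_of_le_of_lt hdeg hk)
  have h1 : (p * derivative q).coeff (N-1)
      = ∑ k ∈ range N, p.coeff k * (((N-k:ℕ):F) * q.coeff (N-k)) := by
    rw [coeff_mul, Finset.Nat.sum_antidiagonal_eq_sum_range_succ_mk, hNN]
    refine Finset.sum_congr rfl fun k hk => ?_
    rw [Finset.mem_range] at hk
    rw [coeff_derivative]
    have h : ((N - 1 - k : ℕ) : F) + 1 = ((N - k : ℕ) : F) := by
      rw [← Nat.cast_add_one]; congr 1; omega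
    rw [mul_add, mul_one, mul_comm]
    have h' : N - 1 - k + 1 = N - k := by omega
    rw [h']
    rw [← h]; ring
  have h2 : (derivative p * q).coeff (N-1)
      = ∑ k ∈ range N, (((k+1:ℕ)):F) * p.coeff (k+1) * q.coeff (N-(k+1)) := by
    rw [coeff_mul, Finset.Nat.sum_antidiagonal_eq_sum_range_succ_mk, hNN]
    refine Finset.sum_congr rfl fun k hk => ?_
    rw [Finset.mem_range] at hk
    rw [coeff_derivative]
    have h : N - 1 - k = N - (k+1) := by omega
    rw [h]; push_cast; ring
  have key : (p * derivative q).coeff (N-1) = (m : F) * (derivative p * q).coeff (N-1) := by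
    rw [poly_id' p m, coeff_C_mul]
  have hT1 : ∑ k ∈ range (d+1), (((N-k:ℕ)):F) * p.coeff k * q.coeff (N-k)
      = (p * derivative q).coeff (N-1) := by
    rw [h1]
    rcases eq_or_lt_of_le hN with h | h
    · rw [← h, Finset.sum_range_succ, Nat.sub_self]
      simp only [Nat.cast_zero, zero_mul]
      rw [add_zero]
      exact Finset.sum_congr rfl fun k hk => by ring
    · rw [Finset.sum_subset (Finset.range_subset_range.mpr (by omega : d+1 ≤ N))
          (fun k hk hk' => by
            rw [hpz k (by simp only [Finset.mem_range] at hk'; omega)]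
            ring)]
      exact Finset.sum_congr rfl fun k hk => by ring
  have hT2 : ∑ k ∈ range (d+1), ((k:ℕ):F) * p.coeff k * q.coeff (N-k)
      = (derivative p * q).coeff (N-1) := by
    rw [h2]
    have e1 : ∑ k ∈ range (d+1), ((k:ℕ):F) * p.coeff k * q.coeff (N-k)
        = ∑ k ∈ range (N+1), ((k:ℕ):F) * p.coeff k * q.coeff (N-k) := by
      refine Finset.sum_subset (Finset.range_subset_range.mpr (by omega)) fun k hk hk' => ?_
      rw [hpz k (by simp only [Finset.mem_range] at hk'; omega)]
      ring
    rw [e1, Finset.sum_range_succ']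
    simp
  have expand : ∀ k ∈ range (d+1),
      ((N:F) - ((m:F)+1)*k) * p.coeff k * q.coeff (N-k)
      = (((N-k:ℕ)):F) * p.coeff k * q.coeff (N-k)
        - (m:F) * (((k:ℕ):F) * p.coeff k * q.coeff (N-k)) := by
    intro k hk
    rw [Finset.mem_range] at hk
    have hkN : ((N-k:ℕ):F) = (N:F) - (k:F) := by
      have : k ≤ N := by omega
      push_cast [this]; ring
    rw [hkN]; ring
  rw [Finset.sum_congr rfl expand, Finset.sum_sub_distrib, ← Finset.mul_sum, hT1, hT2, key]
  ring

lemma term_eq' {F : Type*} [Field F] [CharZero F] (m n k : ℕ) (hk : 1 ≤ k) (hkn : k ≤ n) :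
    (((m:F)+1) * (Nat.choose (n-1) (k-1) : F) - (Nat.choose n k : F)) * (Nat.factorial k : F)
      * (Nat.factorial (n-k) : F)
    = (Nat.factorial (n-1) : F) * (((m:F)+1)*(k:F) - (n:F)) := by
  have hA : Nat.choose n k * Nat.factorial k * Nat.factorial (n-k) = Nat.factorial n :=
    Nat.choose_mul_factorial_mul_factorial hkn
  have hB : Nat.choose (n-1) (k-1) * Nat.factorial (k-1) * Nat.factorial (n-1-(k-1))
      = Nat.factorial (n-1) := Nat.choose_mul_factorial_mul_factorial (by omega)
  rw [show n-1-(k-1) = n-k by omega] at hB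
  have hkf : Nat.factorial k = k * Nat.factorial (k-1) := by
    cases k with
    | zero => omega
    | succ k => simp [Nat.factorial_succ]
  have hnf : Nat.factorial n = n * Nat.factorial (n-1) := by
    cases n with
    | zero => omega
    | succ n => simp [Nat.factorial_succ]
  have e1 : (Nat.factorial k : F) = (k:F) * (Nat.factorial (k-1) : F) := by exact_mod_cast hkf
  have e2 : (Nat.factorial n : F) = (n:F) * (Nat.factorial (n-1) : F) := by exact_mod_cast hnf
  have e3 : (Nat.choose n k : F) * (Nat.factorial k : F) * (Nat.factorial (n-k) : F)
      = (Nat.factorial n : F) := by exact_mod_cast hA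
  have e4 : (Nat.choose (n-1) (k-1) : F) * (Nat.factorial (k-1) : F) * (Nat.factorial (n-k) : F)
      = (Nat.factorial (n-1) : F) := by exact_mod_cast hB
  linear_combination (((m:F)+1) * (Nat.choose (n-1) (k-1) : F) * (Nat.factorial (n-k) : F)) * e1
    + (((m:F)+1)*(k:F)) * e4 - e3 - e2


/-- Over a field of characteristic zero, the coefficients `c_j` of `p^m` (for `p` of degree
at most `d ≥ 1`) satisfy, for every `n ≥ d`,
`p₀ · n! · c_n = Σ_{k=1}^{d} ((m+1)·C(n−1,k−1) − C(n,k)) · k! · p_k · (n−k)! · c_{n−k}`;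
in particular the coefficients of `p^m` form a holonomic sequence of depth `d+1`
and degree at most `d`. -/
theorem stmt11 {F : Type*} [Field F] [CharZero F] (d : ℕ) (hd : 1 ≤ d)
    (p : Polynomial F) (hdeg : p.natDegree ≤ d) (m : ℕ) :
    (∀ n : ℕ, d ≤ n →
      p.coeff 0 * (Nat.factorial n : F) * (p ^ m).coeff n =
        ∑ k ∈ Finset.Icc 1 d,
          (((m : F) + 1) * (Nat.choose (n - 1) (k - 1) : F) - (Nat.choose n k : F)) *
            (Nat.factorial k : F) * p.coeff k * (Nat.factorial (n - k) : F) *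
            (p ^ m).coeff (n - k)) ∧
    ∃ a : Fin (d + 1 + 1) → Polynomial F, a 0 ≠ 0 ∧ (∀ i, (a i).degree ≤ (d : ℕ)) ∧
      ∀ n : ℕ, ∑ i : Fin (d + 1 + 1),
        (a i).eval (n : F) * (p ^ m).coeff (n + (d + 1 - (i : ℕ))) = 0 := by
  constructor
  · -- Part 1
    intro n hn
    have hcore := core' d hd p hdeg m n hn
    rw [Finset.sum_range_succ'] at hcore
    simp only [Nat.cast_zero, mul_zero, sub_zero, Nat.sub_zero] at hcore
    have e2 : (Nat.factorial n : F) = (n:F) * (Nat.factorial (n-1) : F) := by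
      have hnf : Nat.factorial n = n * Nat.factorial (n-1) := by
        cases n with
        | zero => omega
        | succ n => simp [Nat.factorial_succ]
      exact_mod_cast hnf
    have hIcc : ∑ k ∈ Finset.Icc 1 d,
        (((m : F) + 1) * (Nat.choose (n - 1) (k - 1) : F) - (Nat.choose n k : F)) *
          (Nat.factorial k : F) * p.coeff k * (Nat.factorial (n - k) : F) *
          (p ^ m).coeff (n - k)
        = ∑ i ∈ range d, (-(Nat.factorial (n-1) : F))
            * (((n:F) - ((m:F)+1)*((i+1:ℕ):F)) * p.coeff (i+1) * (p^m).coeff (n-(i+1))) := by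
      rw [show Finset.Icc 1 d = Finset.Ico 1 (d+1) by rw [Finset.Ico_add_one_right_eq_Icc],
        Finset.sum_Ico_eq_sum_range]
      simp only [Nat.add_sub_cancel]
      refine Finset.sum_congr rfl fun i hi => ?_
      rw [Finset.mem_range] at hi
      rw [add_comm 1 i]
      have ht := term_eq' (F := F) m n (i+1) (by omega) (by omega)
      push_cast at ht ⊢
      linear_combination (p.coeff (i+1) * (p^m).coeff (n-(i+1))) * ht
    rw [hIcc, ← Finset.mul_sum]
    push_cast at hcore ⊢
    linear_combination ((Nat.factorial (n-1) : F)) * hcore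
      + (p.coeff 0 * (p^m).coeff n) * e2
  · -- Part 2
    by_cases hp : p = 0
    · refine ⟨fun i => if i = 0 then 1 else 0, by simp, fun i => ?_, fun n => ?_⟩
      · by_cases hi : i = 0 <;> simp [hi]
      · subst hp
        have hc : ∀ j, 1 ≤ j → ((0:Polynomial F)^m).coeff j = 0 := by
          intro j hj
          cases m with
          | zero => rw [pow_zero, coeff_one]; simp; omega
          | succ m => rw [zero_pow (Nat.succ_ne_zero m)]; simp
        refine Finset.sum_eq_zero fun i _ => ?_
        by_cases hi : i = 0
        · subst hi
          simp only [↓reduceIte, eval_one, one_mul]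
          refine hc _ ?_
          have h0 : ((0 : Fin (d+1+1)) : ℕ) = 0 := rfl
          omega
        · simp [hi]
    · set s := p.natTrailingDegree with hs_def
      have hs : s ≤ d := le_trans (natTrailingDegree_le_natDegree p) hdeg
      have hps : p.coeff s ≠ 0 := fun h => hp (trailingCoeff_eq_zero.mp h)
      have hlo : ∀ k, k < s → p.coeff k = 0 := fun k hk =>
        coeff_eq_zero_of_lt_natTrailingDegree hk
      have hhi : ∀ k, d < k → p.coeff k = 0 := fun k hk =>
        coeff_eq_zero_of_natDegree_lt (lt_of_le_of_lt hdeg hk)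
      refine ⟨fun i => C (p.coeff (s + (i:ℕ)))
          * (X + C ((d:F) + 1 + (s:F) - ((m:F)+1)*((s:F)+((i:ℕ):F)))), ?_, fun i => ?_, fun n => ?_⟩
      · simp only [Fin.val_zero, add_zero, Nat.cast_zero]
        exact mul_ne_zero (fun h => hps (C_eq_zero.mp h)) (X_add_C_ne_zero _)
      · calc (C (p.coeff (s + (i:ℕ)))
            * (X + C ((d:F) + 1 + (s:F) - ((m:F)+1)*((s:F)+((i:ℕ):F))))).degree
            ≤ (C (p.coeff (s + (i:ℕ)))).degree
              + (X + C ((d:F) + 1 + (s:F) - ((m:F)+1)*((s:F)+((i:ℕ):F)))).degree :=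
              degree_mul_le _ _
          _ ≤ 0 + 1 := add_le_add degree_C_le (degree_X_add_C _).le
          _ ≤ (d:ℕ) := by rw [zero_add]; exact_mod_cast hd
      · have hcore := core' d hd p hdeg m (n + d + 1 + s) (by omega)
        set N := n + d + 1 + s with hN_def
        set g : ℕ → F := fun k => ((N:F) - ((m:F)+1)*k) * p.coeff k * (p ^ m).coeff (N-k)
          with hg_def
        have step2 : ∑ k ∈ range (s + (d+2)), g k = 0 := by
          rw [← hcore]
          refine (Finset.sum_subset (Finset.range_subset_range.mpr (by omega)) fun k hk hk' => ?_).symm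
          simp only [hg_def]
          rw [hhi k (by simp only [Finset.mem_range] at hk'; omega)]
          ring
        have step3 : ∑ i ∈ range (d+2), g (s + i) = 0 := by
          have h0 : ∑ k ∈ Finset.Ico 0 s, g k = 0 :=
            Finset.sum_eq_zero fun k hk => by
              simp only [Finset.mem_Ico] at hk
              simp only [hg_def]
              rw [hlo k hk.2]; ring
          have hsplit := Finset.sum_Ico_consecutive g (Nat.zero_le s)
            (by omega : s ≤ s + (d+2))
          rw [h0, zero_add] at hsplit
          rw [Finset.sum_Ico_eq_sum_range] at hsplit
          simp only [Nat.add_sub_cancel_left] at hsplit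
          rw [hsplit, ← Finset.range_eq_Ico]
          exact step2
        have step3' : ∑ i : Fin (d+2), g (s + (i:ℕ)) = 0 := by
          rw [Fin.sum_univ_eq_sum_range (fun i => g (s + i))]; exact step3
        refine Eq.trans (Finset.sum_congr rfl fun i _ => ?_) step3'
        have hi : (i:ℕ) < d + 2 := i.isLt
        simp only [hg_def, eval_mul, eval_add, eval_C, eval_X]
        have hidx : N - (s + (i:ℕ)) = n + (d + 1 - (i:ℕ)) := by omega
        rw [hidx, hN_def]
        push_cast
        ring
end

section
/- Let F be a field of characteristic zero and let p ∈ F[X] be a polynomial of degree at most d with d ≥ 1. Then for all natural numbers m and all n with n ≥ d, the following identity holds in F[X]: (p^{m+1})^{(n)} = (m+1) · Σ_{k=1}^{d} C(n−1, k−1) · p^{(k)} · (p^m)^{(n−k)}, where f^{(j)} denotes the j-th formal derivative and C(a,b) denotes the binomial coefficient (cast into F). -/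
open Polynomial Finset

/-- Over a field of characteristic zero, for a polynomial `p` of degree at most `d ≥ 1`
and all `m` and `n ≥ d`, the identity
`(p^{m+1})⁽ⁿ⁾ = (m+1) · Σ_{k=1}^{d} C(n−1,k−1) · p⁽ᵏ⁾ · (p^m)⁽ⁿ⁻ᵏ⁾`
holds in `F[X]`, where `f⁽ʲ⁾` is the `j`-th formal derivative. -/
theorem stmt14 {F : Type*} [Field F] [CharZero F] (d : ℕ) (hd : 1 ≤ d)
    (p : Polynomial F) (hdeg : p.natDegree ≤ d) :
    ∀ m n : ℕ, d ≤ n →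
      derivative^[n] (p ^ (m + 1)) =
        Polynomial.C ((m : F) + 1) *
          ∑ k ∈ Finset.Icc 1 d,
            Polynomial.C ((Nat.choose (n - 1) (k - 1) : F)) *
              (derivative^[k] p) * (derivative^[n - k] (p ^ m)) := by
  intro m n hn
  have hext : ∑ k ∈ Finset.Icc 1 d,
        Polynomial.C ((Nat.choose (n - 1) (k - 1) : F)) *
          (derivative^[k] p) * (derivative^[n - k] (p ^ m))
      = ∑ k ∈ Finset.Icc 1 n,
        Polynomial.C ((Nat.choose (n - 1) (k - 1) : F)) *
          (derivative^[k] p) * (derivative^[n - k] (p ^ m)) := by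
    refine Finset.sum_subset (Finset.Icc_subset_Icc_right hn) ?_
    intro k hk hk'
    simp only [Finset.mem_Icc] at hk hk'
    have : p.natDegree < k := lt_of_le_of_lt hdeg (by omega)
    rw [Polynomial.iterate_derivative_eq_zero this]
    ring
  rw [hext]
  obtain ⟨n', rfl⟩ : ∃ n', n = n' + 1 := ⟨n - 1, by omega⟩
  rw [Function.iterate_succ_apply, derivative_pow, Nat.add_sub_cancel,
    mul_assoc, Polynomial.iterate_derivative_C_mul,
    Polynomial.iterate_derivative_mul]
  have hreindex : ∑ k ∈ Finset.Icc 1 (n' + 1),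
        Polynomial.C ((Nat.choose (n' + 1 - 1) (k - 1) : F)) *
          (derivative^[k] p) * (derivative^[n' + 1 - k] (p ^ m))
      = ∑ j ∈ Finset.range (n' + 1),
        Polynomial.C ((Nat.choose n' j : F)) *
          (derivative^[j + 1] p) * (derivative^[n' - j] (p ^ m)) := by
    rw [← Finset.Ico_add_one_right_eq_Icc]
    rw [Finset.sum_Ico_eq_sum_range]
    refine Finset.sum_congr rfl fun x hx => ?_
    simp only [Finset.mem_range] at hx
    rw [add_comm 1 x, Nat.add_sub_cancel]
    congr 2
    omega
  rw [hreindex, Finset.mul_sum, Finset.mul_sum]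
  refine Finset.sum_congr rfl fun j hj => ?_
  simp only [Finset.mem_range] at hj
  rw [Function.iterate_succ_apply]
  have : (n' + 1 : F) = ((n' + 1 : ℕ) : F) := by push_cast; ring
  rw [nsmul_eq_mul, ← Polynomial.C_eq_natCast]
  push_cast
  ring
end
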